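/- Let 0 < q < p - 1 < r and A, B, C > 0. If C < max_{t>0} m(t) where m(t) = A t^{p-1-q} − B t^{r-q}, then the function φ(t) = (A/p)t^p − (C/(q+1))t^{q+1} − (B/(r+1))t^{r+1} has exactly two critical points 0 < t₁ < t₂ on (0,∞), with t₁ a local minimum and t₂ a local maximum of φ. -/

import Mathlib

/-!
On `(0, ∞)` we have `φ'(t) = t^q (m(t) - C)`, and `m(t) = A t^a - B t^b` with `0 < a = p-1-q <
b = r-q` increases up to the zero of its derivative and then decreases to `-∞`, starting from
`m(0) = 0 < C`. Since `m` exceeds `C` somewhere, `m - C` changes sign exactly twice: from `-` to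
`+` at `t₁` and from `+` to `-` at `t₂`. The first-derivative test then makes `t₁` a local minimum
and `t₂` a local maximum of `φ`.
-/

open Set Filter Real

section UnimodalLevelSet

variable {f : ℝ → ℝ} {s c t₀ : ℝ}

theorem exists_gt_eq_of_tendsto_atBot (hf : ContinuousOn f (Ici t₀))
    (hbot : Tendsto f atTop atBot) (ht₀ : c < f t₀) : ∃ t₂, t₀ < t₂ ∧ f t₂ = c := by
  obtain ⟨T, hTc, hT⟩ := ((hbot.eventually (eventually_lt_atBot c)).and
    (eventually_ge_atTop t₀)).exists
  obtain ⟨t₂, ht₂, hft₂⟩ :=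
    intermediate_value_Ioo' hT (hf.mono Icc_subset_Ici_self) ⟨hTc, ht₀⟩
  exact ⟨t₂, ht₂.1, hft₂⟩

theorem exists_two_crossings_of_unimodal (hf : ContinuousOn f (Ici 0))
    (hmono : StrictMonoOn f (Icc 0 s)) (hanti : StrictAntiOn f (Ici s))
    (hbot : Tendsto f atTop atBot) (h0 : f 0 < c) (ht₀ : 0 ≤ t₀) (hct₀ : c < f t₀) :
    ∃ t₁ t₂, 0 < t₁ ∧ t₁ < t₂ ∧
      ∀ t, 0 ≤ t → (c < f t ↔ t ∈ Ioo t₁ t₂) ∧ (f t = c ↔ t = t₁ ∨ t = t₂) := by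
  obtain ⟨t₁, ht₁, hft₁⟩ :=
    intermediate_value_Ioo ht₀ (hf.mono Icc_subset_Ici_self) ⟨h0, hct₀⟩
  obtain ⟨t₂, ht₂, hft₂⟩ :=
    exists_gt_eq_of_tendsto_atBot (hf.mono (Ici_subset_Ici.2 ht₀)) hbot hct₀
  have ht₁s : t₁ < s := by
    by_contra! h
    have := hanti h (h.trans ht₁.2.le) ht₁.2
    linarith
  have hst₂ : s < t₂ := by
    by_contra! h
    have := hmono ⟨ht₀, ht₂.le.trans h⟩ ⟨ht₀.trans ht₂.le, h⟩ ht₂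
    linarith
  refine ⟨t₁, t₂, ht₁.1, ht₁s.trans hst₂, fun t ht => ?_⟩
  rcases le_total t s with hts | hst
  · have h₁ : t₁ ∈ Icc 0 s := ⟨ht₁.1.le, ht₁s.le⟩
    have ht : t ∈ Icc 0 s := ⟨ht, hts⟩
    rw [← hft₁, hmono.lt_iff_lt h₁ ht, hmono.eq_iff_eq ht h₁]
    constructor
    · exact ⟨fun h => ⟨h, by linarith⟩, And.left⟩
    · exact ⟨Or.inl, fun h => h.resolve_right (by linarith)⟩
  · have h₂ : t₂ ∈ Ici s := hst₂.le
    rw [← hft₂, hanti.lt_iff_gt h₂ hst, hanti.eq_iff_eq hst h₂]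
    constructor
    · exact ⟨fun h => ⟨by linarith, h⟩, And.right⟩
    · exact ⟨fun h => Or.inr h.symm, fun h => (h.resolve_left (by linarith)).symm⟩

end UnimodalLevelSet

section RpowDifference

variable {A B a b : ℝ}

theorem hasDerivAt_mul_rpow_sub_mul_rpow {t : ℝ} (ht : 0 < t) :
    HasDerivAt (fun t => A * t ^ a - B * t ^ b)
      (t ^ (a - 1) * (A * a - B * b * t ^ (b - a))) t := by
  refine (((hasDerivAt_rpow_const (p := a) (Or.inl ht.ne')).const_mul A).sub
    ((hasDerivAt_rpow_const (p := b) (Or.inl ht.ne')).const_mul B)).congr_deriv ?_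
  have : t ^ (b - 1) = t ^ (a - 1) * t ^ (b - a) := by rw [← rpow_add ht]; ring_nf
  rw [this]
  ring

theorem continuous_mul_rpow_sub_mul_rpow (ha : 0 ≤ a) (hb : 0 ≤ b) :
    Continuous fun t : ℝ => A * t ^ a - B * t ^ b := by
  have := continuous_rpow_const ha
  have := continuous_rpow_const hb
  fun_prop

theorem tendsto_mul_rpow_sub_mul_rpow_atBot (hB : 0 < B) (ha : 0 < a) (hab : a < b) :
    Tendsto (fun t : ℝ => A * t ^ a - B * t ^ b) atTop atBot := by
  have hfactor : Tendsto (fun t : ℝ => A + -(B * t ^ (b - a))) atTop atBot :=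
    tendsto_atBot_add_const_left _ A <| tendsto_neg_atTop_atBot.comp <|
      (tendsto_rpow_atTop (sub_pos.2 hab)).const_mul_atTop hB
  refine ((tendsto_rpow_atTop ha).atTop_mul_atBot₀ hfactor).congr' ?_
  filter_upwards [eventually_gt_atTop 0] with t ht
  rw [mul_add, mul_neg, ← mul_assoc, mul_comm _ B, mul_assoc, ← rpow_add ht]
  ring_nf

/-- The zero of the factor `A a - B b t^(b-a)` in `hasDerivAt_mul_rpow_sub_mul_rpow`. -/
noncomputable def rpowDiffPeak (A B a b : ℝ) : ℝ := (A * a / (B * b)) ^ (b - a)⁻¹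

variable (hA : 0 < A) (hB : 0 < B) (ha : 0 < a) (hab : a < b)
include hA hB ha hab

theorem rpowDiffPeak_rpow : rpowDiffPeak A B a b ^ (b - a) = A * a / (B * b) :=
  rpow_inv_rpow (by have := ha.trans hab; positivity) (sub_pos.2 hab).ne'

theorem rpowDiffPeak_pos : 0 < rpowDiffPeak A B a b := by
  have := ha.trans hab
  unfold rpowDiffPeak
  positivity

theorem lt_rpowDiffPeak_iff {t : ℝ} (ht : 0 ≤ t) :
    t < rpowDiffPeak A B a b ↔ B * b * t ^ (b - a) < A * a := by
  rw [← rpow_lt_rpow_iff ht (rpowDiffPeak_pos hA hB ha hab).le (sub_pos.2 hab),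
    rpowDiffPeak_rpow hA hB ha hab, lt_div_iff₀ (by have := ha.trans hab; positivity),
    mul_comm (t ^ _)]

theorem rpowDiffPeak_lt_iff {t : ℝ} (ht : 0 ≤ t) :
    rpowDiffPeak A B a b < t ↔ A * a < B * b * t ^ (b - a) := by
  rw [← rpow_lt_rpow_iff (rpowDiffPeak_pos hA hB ha hab).le ht (sub_pos.2 hab),
    rpowDiffPeak_rpow hA hB ha hab, div_lt_iff₀ (by have := ha.trans hab; positivity),
    mul_comm (t ^ _)]

theorem strictMonoOn_mul_rpow_sub_mul_rpow :
    StrictMonoOn (fun t : ℝ => A * t ^ a - B * t ^ b) (Icc 0 (rpowDiffPeak A B a b)) := by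
  refine strictMonoOn_of_deriv_pos (convex_Icc _ _)
    (continuous_mul_rpow_sub_mul_rpow ha.le (ha.trans hab).le).continuousOn fun t ht => ?_
  rw [interior_Icc] at ht
  rw [(hasDerivAt_mul_rpow_sub_mul_rpow ht.1).deriv]
  exact mul_pos (rpow_pos_of_pos ht.1 _)
    (sub_pos.2 ((lt_rpowDiffPeak_iff hA hB ha hab ht.1.le).1 ht.2))

theorem strictAntiOn_mul_rpow_sub_mul_rpow :
    StrictAntiOn (fun t : ℝ => A * t ^ a - B * t ^ b) (Ici (rpowDiffPeak A B a b)) := by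
  refine strictAntiOn_of_deriv_neg (convex_Ici _)
    (continuous_mul_rpow_sub_mul_rpow ha.le (ha.trans hab).le).continuousOn fun t ht => ?_
  rw [interior_Ici] at ht
  have ht₀ : 0 < t := (rpowDiffPeak_pos hA hB ha hab).trans ht
  rw [(hasDerivAt_mul_rpow_sub_mul_rpow ht₀).deriv]
  exact mul_neg_of_pos_of_neg (rpow_pos_of_pos ht₀ _)
    (sub_neg.2 ((rpowDiffPeak_lt_iff hA hB ha hab ht₀.le).1 ht))

end RpowDifference

theorem hasDerivAt_phi {p q r A B C t : ℝ} (hp : p ≠ 0) (hq : q + 1 ≠ 0) (hr : r + 1 ≠ 0)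
    (ht : 0 < t) :
    HasDerivAt (fun t => A / p * t ^ p - C / (q + 1) * t ^ (q + 1) - B / (r + 1) * t ^ (r + 1))
      (t ^ q * (A * t ^ (p - 1 - q) - B * t ^ (r - q) - C)) t := by
  refine ((((hasDerivAt_rpow_const (p := p) (Or.inl ht.ne')).const_mul (A / p)).sub
    ((hasDerivAt_rpow_const (p := q + 1) (Or.inl ht.ne')).const_mul (C / (q + 1)))).sub
    ((hasDerivAt_rpow_const (p := r + 1) (Or.inl ht.ne')).const_mul (B / (r + 1)))).congr_deriv ?_
  have hp' : t ^ (p - 1) = t ^ q * t ^ (p - 1 - q) := by rw [← rpow_add ht]; ring_nf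
  have hr' : t ^ (r + 1 - 1) = t ^ q * t ^ (r - q) := by rw [← rpow_add ht]; ring_nf
  rw [hp', hr', add_sub_cancel_right]
  field_simp
  ring

theorem critical_points_of_hasDerivAt_mul_sub {φ g m : ℝ → ℝ} {C t₁ t₂ : ℝ}
    (hφ : ∀ t, 0 < t → HasDerivAt φ (g t * (m t - C)) t) (hg : ∀ t, 0 < t → 0 < g t)
    (ht₁ : 0 < t₁) (ht₁₂ : t₁ < t₂)
    (hlevel : ∀ t, 0 ≤ t → (C < m t ↔ t ∈ Ioo t₁ t₂) ∧ (m t = C ↔ t = t₁ ∨ t = t₂)) :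
    deriv φ t₁ = 0 ∧ deriv φ t₂ = 0 ∧
      (∀ t : ℝ, 0 < t → deriv φ t = 0 → t = t₁ ∨ t = t₂) ∧
      IsLocalMin φ t₁ ∧ IsLocalMax φ t₂ := by
  have hderiv t (ht : 0 < t) : deriv φ t = g t * (m t - C) := (hφ t ht).deriv
  have hdiff a (ha : 0 ≤ a) b : DifferentiableOn ℝ φ (Ioo a b) := fun t ht =>
    (hφ t (ha.trans_lt ht.1)).differentiableAt.differentiableWithinAt
  have hcrit t (ht : 0 < t) : deriv φ t = 0 ↔ t = t₁ ∨ t = t₂ := by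
    rw [hderiv t ht, mul_eq_zero, sub_eq_zero, or_iff_right (hg t ht).ne', (hlevel t ht.le).2]
  have hnonpos t (ht : 0 < t) (hout : t ∉ Ioo t₁ t₂) : deriv φ t ≤ 0 := by
    rw [hderiv t ht]
    exact mul_nonpos_of_nonneg_of_nonpos (hg t ht).le
      (sub_nonpos.2 (not_lt.1 (mt (hlevel t ht.le).1.1 hout)))
  have hnonneg t (ht : t ∈ Ioo t₁ t₂) : 0 ≤ deriv φ t := by
    have ht₀ : 0 < t := ht₁.trans ht.1
    rw [hderiv t ht₀]
    exact mul_nonneg (hg t ht₀).le (sub_nonneg.2 ((hlevel t ht₀.le).1.2 ht).le)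
  refine ⟨(hcrit t₁ ht₁).2 (Or.inl rfl), (hcrit t₂ (ht₁.trans ht₁₂)).2 (Or.inr rfl),
    fun t ht => (hcrit t ht).1, ?_, ?_⟩
  · exact isLocalMin_of_deriv_Ioo ht₁ ht₁₂ (hφ t₁ ht₁).continuousAt (hdiff 0 le_rfl t₁)
      (hdiff t₁ ht₁.le t₂) (fun t ht => hnonpos t ht.1 fun h => lt_asymm h.1 ht.2) hnonneg
  · exact isLocalMax_of_deriv_Ioo ht₁₂ (lt_add_one t₂) (hφ t₂ (ht₁.trans ht₁₂)).continuousAt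
      (hdiff t₁ ht₁.le t₂) (hdiff t₂ (ht₁.trans ht₁₂).le (t₂ + 1)) hnonneg
      (fun t ht => hnonpos t (ht₁.trans (ht₁₂.trans ht.1)) fun h => lt_asymm h.2 ht.1)

theorem stmt_7 (p q r A B C : ℝ) (hq : 0 < q) (hqp : q < p - 1) (hpr : p - 1 < r)
    (hA : 0 < A) (hB : 0 < B) (hC : 0 < C)
    (m : ℝ → ℝ) (hm : ∀ t, m t = A * t ^ (p - 1 - q) - B * t ^ (r - q))
    (hCmax : ∃ t : ℝ, 0 < t ∧ C < m t)
    (φ : ℝ → ℝ)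
    (hφ : ∀ t, φ t = (A / p) * t ^ p - (C / (q + 1)) * t ^ (q + 1)
      - (B / (r + 1)) * t ^ (r + 1)) :
    ∃ t₁ t₂ : ℝ, 0 < t₁ ∧ t₁ < t₂ ∧
      deriv φ t₁ = 0 ∧ deriv φ t₂ = 0 ∧
      (∀ t : ℝ, 0 < t → deriv φ t = 0 → t = t₁ ∨ t = t₂) ∧
      IsLocalMin φ t₁ ∧ IsLocalMax φ t₂ := by
  have hm' : m = fun t => A * t ^ (p - 1 - q) - B * t ^ (r - q) := funext hm
  obtain ⟨t₀, ht₀, hCt₀⟩ := hCmax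
  have ha : 0 < p - 1 - q := by linarith
  have hab : p - 1 - q < r - q := by linarith
  obtain ⟨t₁, t₂, ht₁, ht₁₂, hlevel⟩ := exists_two_crossings_of_unimodal (f := m)
    (hm' ▸ (continuous_mul_rpow_sub_mul_rpow ha.le (ha.trans hab).le).continuousOn)
    (hm' ▸ strictMonoOn_mul_rpow_sub_mul_rpow hA hB ha hab)
    (hm' ▸ strictAntiOn_mul_rpow_sub_mul_rpow hA hB ha hab)
    (hm' ▸ tendsto_mul_rpow_sub_mul_rpow_atBot hB ha hab)
    (by simp [hm, zero_rpow ha.ne', zero_rpow (ha.trans hab).ne', hC]) ht₀.le hCt₀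
  refine ⟨t₁, t₂, ht₁, ht₁₂, critical_points_of_hasDerivAt_mul_sub (fun t ht => ?_)
    (fun t ht => rpow_pos_of_pos ht q) ht₁ ht₁₂ hlevel⟩
  rw [hm, show φ = _ from funext hφ]
  exact hasDerivAt_phi (by linarith) (by linarith) (by linarith) ht
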